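/- arXiv:1006.2282 — 3 statements merged into one kernel-verified Lean document; each statement's English description precedes it below -/
import Mathlib

section
/- Let α > 1 and β₁, β₂ ∈ [0,1) with β₁ + β₂ < 1. Define g_i(t) = |t|^{-β_i} (1+|t|)^{β_i-α} for i = 1,2. Then sup over u ∈ ℝ of (1+|u|)^α · ∫_ℝ g₁(u-t) g₂(t) dt is finite. -/
open MeasureTheory Real

/-- Auxiliary bump: `|s|^(-σ) + 1` on `[-1,1]`, zero elsewhere. -/
noncomputable def Qf (σ : ℝ) : ℝ → ℝ :=
  (Set.Icc (-1 : ℝ) 1).indicator (fun s => |s| ^ (-σ) + 1)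

lemma Qf_nonneg (σ s : ℝ) : 0 ≤ Qf σ s := by
  unfold Qf
  apply Set.indicator_nonneg
  intro x _
  positivity

lemma Qf_of_abs_le {σ s : ℝ} (h : |s| ≤ 1) : Qf σ s = |s| ^ (-σ) + 1 := by
  unfold Qf
  rw [Set.indicator_of_mem]
  rw [Set.mem_Icc, ← abs_le]
  exact h

lemma Qf_integrable {σ : ℝ} (h0 : 0 ≤ σ) (h1 : σ < 1) : Integrable (Qf σ) := by
  unfold Qf
  rw [integrable_indicator_iff measurableSet_Icc]
  have hc : IntegrableOn (fun _ : ℝ => (1 : ℝ)) (Set.Icc (-1 : ℝ) 1) volume :=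
    continuous_const.integrableOn_Icc
  refine Integrable.add ?_ hc
  have hpos : IntervalIntegrable (fun x : ℝ => x ^ (-σ)) volume 0 1 :=
    intervalIntegral.intervalIntegrable_rpow' (by linarith)
  have hO1 : IntegrableOn (fun x : ℝ => x ^ (-σ)) (Set.Ioc 0 1) volume := by
    rwa [intervalIntegrable_iff_integrableOn_Ioc_of_le (by norm_num)] at hpos
  have hI1 : IntegrableOn (fun s : ℝ => |s| ^ (-σ)) (Set.Icc 0 1) volume := by
    rw [integrableOn_Icc_iff_integrableOn_Ioc]
    apply hO1.congr_fun _ measurableSet_Ioc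
    intro x hx
    simp only
    rw [abs_of_pos hx.1]
  have hneg : IntervalIntegrable (fun x : ℝ => (0 - x) ^ (-σ)) volume (0 - 1) (0 - 0) :=
    (hpos.comp_sub_left 0).symm
  have hI2 : IntegrableOn (fun s : ℝ => |s| ^ (-σ)) (Set.Icc (-1) 0) volume := by
    have h' : IntegrableOn (fun x : ℝ => (0 - x) ^ (-σ)) (Set.Ioc (-1 : ℝ) 0) volume := by
      have h'' := (intervalIntegrable_iff_integrableOn_Ioc_of_le
        (by norm_num : (0:ℝ) - 1 ≤ 0 - 0)).1 hneg
      simpa only [show (0:ℝ) - 1 = -1 by norm_num, show (0:ℝ) - 0 = 0 by norm_num] using h''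
    rw [integrableOn_Icc_iff_integrableOn_Ioc]
    apply h'.congr_fun _ measurableSet_Ioc
    intro x hx
    simp only
    rw [abs_of_nonpos hx.2, zero_sub]
  have : Set.Icc (-1 : ℝ) 1 = Set.Icc (-1 : ℝ) 0 ∪ Set.Icc 0 1 :=
    (Set.Icc_union_Icc_eq_Icc (by norm_num) (by norm_num)).symm
  rw [this]
  exact hI2.union hI1

lemma Qf_measurable (σ : ℝ) : Measurable (Qf σ) := by
  unfold Qf
  exact Measurable.indicator (by fun_prop) measurableSet_Icc

lemma gfun_measurable (β γ : ℝ) :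
    Measurable (fun t : ℝ => |t| ^ (-β) * (1 + |t|) ^ γ) := by fun_prop

/-- Core estimate: for `|s| ≥ 1`, `|s|^(-β) (1+|s|)^β ≤ 2`. -/
lemma core_bound {β s : ℝ} (h0 : 0 ≤ β) (h1 : β ≤ 1) (hs : 1 ≤ |s|) :
    |s| ^ (-β) * (1 + |s|) ^ β ≤ 2 := by
  have hspos : (0 : ℝ) < |s| := lt_of_lt_of_le one_pos hs
  have h2 : (1 + |s|) ^ β ≤ 2 ^ β * |s| ^ β := by
    rw [← Real.mul_rpow (by norm_num) (abs_nonneg s)]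
    exact Real.rpow_le_rpow (by positivity) (by linarith) h0
  calc |s| ^ (-β) * (1 + |s|) ^ β ≤ |s| ^ (-β) * (2 ^ β * |s| ^ β) :=
        mul_le_mul_of_nonneg_left h2 (Real.rpow_nonneg (abs_nonneg s) _)
    _ = 2 ^ β * (|s| ^ (-β) * |s| ^ β) := by ring
    _ = 2 ^ β := by rw [← Real.rpow_add hspos, neg_add_cancel, Real.rpow_zero, mul_one]
    _ ≤ 2 ^ (1 : ℝ) := Real.rpow_le_rpow_of_exponent_le one_le_two h1
    _ = 2 := Real.rpow_one 2

/-- `(1+|s|)^α g(s) ≤ 2 (1 + |s|^(-β))`. -/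
lemma Abound (α β : ℝ) (h0 : 0 ≤ β) (h1 : β ≤ 1) (s : ℝ) :
    (1 + |s|) ^ α * (|s| ^ (-β) * (1 + |s|) ^ (β - α)) ≤ 2 * (1 + |s| ^ (-β)) := by
  have hb : (0 : ℝ) < 1 + |s| := by positivity
  have key : (1 + |s|) ^ α * (|s| ^ (-β) * (1 + |s|) ^ (β - α)) =
      |s| ^ (-β) * (1 + |s|) ^ β := by
    rw [mul_comm, mul_assoc, ← Real.rpow_add hb]
    ring_nf
  rw [key]
  have hnn : (0 : ℝ) ≤ |s| ^ (-β) := Real.rpow_nonneg (abs_nonneg s) _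
  rcases le_or_gt |s| 1 with h | h
  · have h2 : (1 + |s|) ^ β ≤ 2 := by
      calc (1 + |s|) ^ β ≤ 2 ^ β := Real.rpow_le_rpow hb.le (by linarith) h0
        _ ≤ 2 ^ (1 : ℝ) := Real.rpow_le_rpow_of_exponent_le one_le_two h1
        _ = 2 := Real.rpow_one 2
    nlinarith [Real.rpow_nonneg hb.le β]
  · have := core_bound h0 h1 h.le
    nlinarith

/-- Tail bound: `g(t) ≤ Qf β t + 2 (1+|t|)^(-α)`. -/
lemma g_le (α β : ℝ) (hα : 1 < α) (h0 : 0 ≤ β) (h1 : β < 1) (t : ℝ) :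
    |t| ^ (-β) * (1 + |t|) ^ (β - α) ≤ Qf β t + 2 * (1 + |t|) ^ (-α) := by
  have hb : (0 : ℝ) < 1 + |t| := by positivity
  have hQ := Qf_nonneg β t
  have htail : (0 : ℝ) ≤ (1 + |t|) ^ (-α) := Real.rpow_nonneg hb.le _
  rcases le_or_gt |t| 1 with h | h
  · have h2 : (1 + |t|) ^ (β - α) ≤ 1 :=
      Real.rpow_le_one_of_one_le_of_nonpos (by linarith [abs_nonneg t]) (by linarith)
    have h3 : |t| ^ (-β) * (1 + |t|) ^ (β - α) ≤ |t| ^ (-β) :=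
      mul_le_of_le_one_right (Real.rpow_nonneg (abs_nonneg t) _) h2
    rw [Qf_of_abs_le h]
    linarith
  · have key : |t| ^ (-β) * (1 + |t|) ^ (β - α) =
        (|t| ^ (-β) * (1 + |t|) ^ β) * (1 + |t|) ^ (-α) := by
      rw [mul_assoc, ← Real.rpow_add hb]
      ring_nf
    rw [key]
    have := core_bound h0 h1.le h.le
    nlinarith

lemma g_nonneg (β γ t : ℝ) : 0 ≤ |t| ^ (-β) * (1 + |t|) ^ γ := by positivity

lemma g_integrable (α β : ℝ) (hα : 1 < α) (h0 : 0 ≤ β) (h1 : β < 1) :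
    Integrable (fun t : ℝ => |t| ^ (-β) * (1 + |t|) ^ (β - α)) := by
  have htail : Integrable (fun t : ℝ => 2 * (1 + |t|) ^ (-α)) := by
    have h' : Integrable (fun x : ℝ => ((1 : ℝ) + ‖x‖) ^ (-α)) :=
      integrable_one_add_norm (by simpa using hα)
    simpa [Real.norm_eq_abs] using h'.const_mul 2
  apply Integrable.mono' ((Qf_integrable h0 h1).add htail)
    (gfun_measurable β (β - α)).aestronglyMeasurable
  filter_upwards with t
  rw [Real.norm_eq_abs, abs_of_nonneg (g_nonneg _ _ t)]
  exact g_le α β hα h0 h1 t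

/-- Peetre-type inequality. -/
lemma peetre (α : ℝ) (hα : 0 ≤ α) (s t : ℝ) :
    (1 + |s + t|) ^ α ≤ 2 ^ α * ((1 + |s|) ^ α + (1 + |t|) ^ α) := by
  have h1 : (1 : ℝ) + |s + t| ≤ 2 * max (1 + |s|) (1 + |t|) := by
    have := abs_add_le s t
    rcases le_total (1 + |s|) (1 + |t|) with h | h
    · rw [max_eq_right h]
      have : |s| ≤ |t| := by linarith
      linarith [abs_nonneg s]
    · rw [max_eq_left h]
      have : |t| ≤ |s| := by linarith
      linarith [abs_nonneg t]
  have hmax : (0 : ℝ) ≤ max (1 + |s|) (1 + |t|) := le_max_of_le_left (by positivity)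
  calc (1 + |s + t|) ^ α ≤ (2 * max (1 + |s|) (1 + |t|)) ^ α :=
        Real.rpow_le_rpow (by positivity) h1 hα
    _ = 2 ^ α * (max (1 + |s|) (1 + |t|)) ^ α := Real.mul_rpow (by norm_num) hmax
    _ ≤ 2 ^ α * ((1 + |s|) ^ α + (1 + |t|) ^ α) := by
        apply mul_le_mul_of_nonneg_left _ (Real.rpow_nonneg (by norm_num) _)
        rcases max_cases (1 + |s|) (1 + |t|) with ⟨h, _⟩ | ⟨h, _⟩ <;> rw [h]
        · linarith [Real.rpow_nonneg (by positivity : (0:ℝ) ≤ 1 + |t|) α]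
        · linarith [Real.rpow_nonneg (by positivity : (0:ℝ) ≤ 1 + |s|) α]

/-- Cross-term bound. -/
lemma crossBound (α β₁ β₂ : ℝ) (hα : 1 < α) (hβ₁0 : 0 ≤ β₁) (hβ₂0 : 0 ≤ β₂) (hβ₂1 : β₂ ≤ 1)
    {s t : ℝ} (hs : s ≠ 0) (ht : t ≠ 0) :
    |s| ^ (-β₁) * (|t| ^ (-β₂) * (1 + |t|) ^ (β₂ - α)) ≤
      |t| ^ (-β₂) * (1 + |t|) ^ (β₂ - α) + Qf (β₁ + β₂) s + Qf (β₁ + β₂) t := by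
  have hQs := Qf_nonneg (β₁ + β₂) s
  have hQt := Qf_nonneg (β₁ + β₂) t
  have hg2 : (0 : ℝ) ≤ |t| ^ (-β₂) * (1 + |t|) ^ (β₂ - α) := g_nonneg _ _ t
  rcases le_or_gt |s| 1 with h | h
  · have h2 : (1 + |t|) ^ (β₂ - α) ≤ 1 :=
      Real.rpow_le_one_of_one_le_of_nonpos (by linarith [abs_nonneg t]) (by linarith)
    have step : |s| ^ (-β₁) * (|t| ^ (-β₂) * (1 + |t|) ^ (β₂ - α)) ≤
        |s| ^ (-β₁) * |t| ^ (-β₂) := by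
      apply mul_le_mul_of_nonneg_left _ (Real.rpow_nonneg (abs_nonneg s) _)
      exact mul_le_of_le_one_right (Real.rpow_nonneg (abs_nonneg t) _) h2
    rcases le_total |s| |t| with hst | hst
    · have h3 : |t| ^ (-β₂) ≤ |s| ^ (-β₂) :=
        Real.rpow_le_rpow_of_nonpos (abs_pos.2 hs) hst (neg_nonpos.2 hβ₂0)
      have h4 : |s| ^ (-β₁) * |t| ^ (-β₂) ≤ |s| ^ (-(β₁ + β₂)) := by
        rw [neg_add, Real.rpow_add (abs_pos.2 hs)]
        exact mul_le_mul_of_nonneg_left h3 (Real.rpow_nonneg (abs_nonneg s) _)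
      have h5 : |s| ^ (-(β₁ + β₂)) ≤ Qf (β₁ + β₂) s := by
        rw [Qf_of_abs_le h]; linarith
      linarith
    · have hts : |t| ≤ 1 := le_trans hst h
      have h3 : |s| ^ (-β₁) ≤ |t| ^ (-β₁) :=
        Real.rpow_le_rpow_of_nonpos (abs_pos.2 ht) hst (neg_nonpos.2 hβ₁0)
      have h4 : |s| ^ (-β₁) * |t| ^ (-β₂) ≤ |t| ^ (-(β₁ + β₂)) := by
        rw [neg_add, Real.rpow_add (abs_pos.2 ht)]
        exact mul_le_mul_of_nonneg_right h3 (Real.rpow_nonneg (abs_nonneg t) _)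
      have h5 : |t| ^ (-(β₁ + β₂)) ≤ Qf (β₁ + β₂) t := by
        rw [Qf_of_abs_le hts]; linarith
      linarith
  · have h1 : |s| ^ (-β₁) ≤ 1 :=
      Real.rpow_le_one_of_one_le_of_nonpos h.le (neg_nonpos.2 hβ₁0)
    have := mul_le_of_le_one_left hg2 h1
    linarith

lemma two_rpow_eq (α : ℝ) : (2 : ℝ) ^ (α + 2) = 2 ^ α * 4 := by
  rw [Real.rpow_add two_pos, Real.rpow_two]
  norm_num

/-- Master pointwise inequality. -/
lemma master (α β₁ β₂ : ℝ) (hα : 1 < α)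
    (hβ₁0 : 0 ≤ β₁) (hβ₁1 : β₁ < 1) (hβ₂0 : 0 ≤ β₂) (hβ₂1 : β₂ < 1)
    {u t : ℝ} (ht : t ≠ 0) (hs : u - t ≠ 0) :
    (1 + |u|) ^ α * ((|u - t| ^ (-β₁) * (1 + |u - t|) ^ (β₁ - α)) *
      (|t| ^ (-β₂) * (1 + |t|) ^ (β₂ - α))) ≤
    2 ^ (α + 2) * ((|t| ^ (-β₂) * (1 + |t|) ^ (β₂ - α)) +
      (|u - t| ^ (-β₁) * (1 + |u - t|) ^ (β₁ - α)) +
      Qf (β₁ + β₂) (u - t) + Qf (β₁ + β₂) t) := by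
  set s := u - t with hsdef
  set G1 := |s| ^ (-β₁) * (1 + |s|) ^ (β₁ - α) with hG1
  set G2 := |t| ^ (-β₂) * (1 + |t|) ^ (β₂ - α) with hG2
  have hG1n : 0 ≤ G1 := g_nonneg _ _ s
  have hG2n : 0 ≤ G2 := g_nonneg _ _ t
  have hpe : (1 + |u|) ^ α ≤ 2 ^ α * ((1 + |s|) ^ α + (1 + |t|) ^ α) := by
    have := peetre α (by linarith) s t
    rwa [hsdef, sub_add_cancel] at this
  have hA1 : (1 + |s|) ^ α * G1 ≤ 2 * (1 + |s| ^ (-β₁)) := Abound α β₁ hβ₁0 hβ₁1.le s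
  have hA2 : (1 + |t|) ^ α * G2 ≤ 2 * (1 + |t| ^ (-β₂)) := Abound α β₂ hβ₂0 hβ₂1.le t
  have hc1 : |s| ^ (-β₁) * G2 ≤ G2 + Qf (β₁ + β₂) s + Qf (β₁ + β₂) t :=
    crossBound α β₁ β₂ hα hβ₁0 hβ₂0 hβ₂1.le hs ht
  have hc2 : |t| ^ (-β₂) * G1 ≤ G1 + Qf (β₁ + β₂) t + Qf (β₁ + β₂) s := by
    have := crossBound α β₂ β₁ hα hβ₂0 hβ₁0 hβ₁1.le ht hs
    rwa [add_comm β₂ β₁] at this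
  have h2pos : (0 : ℝ) < 2 ^ α := Real.rpow_pos_of_pos two_pos α
  calc (1 + |u|) ^ α * (G1 * G2)
      ≤ (2 ^ α * ((1 + |s|) ^ α + (1 + |t|) ^ α)) * (G1 * G2) :=
        mul_le_mul_of_nonneg_right hpe (by positivity)
    _ = (((1 + |s|) ^ α * G1) * G2 + ((1 + |t|) ^ α * G2) * G1) * 2 ^ α := by ring
    _ ≤ ((2 * (1 + |s| ^ (-β₁))) * G2 + (2 * (1 + |t| ^ (-β₂))) * G1) * 2 ^ α := by
        apply mul_le_mul_of_nonneg_right _ h2pos.le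
        apply add_le_add
        · exact mul_le_mul_of_nonneg_right hA1 hG2n
        · exact mul_le_mul_of_nonneg_right hA2 hG1n
    _ = (2 ^ α * 2) * (G2 + |s| ^ (-β₁) * G2 + G1 + |t| ^ (-β₂) * G1) := by ring
    _ ≤ (2 ^ α * 2) * (G2 + (G2 + Qf (β₁ + β₂) s + Qf (β₁ + β₂) t) + G1 +
          (G1 + Qf (β₁ + β₂) t + Qf (β₁ + β₂) s)) := by
        apply mul_le_mul_of_nonneg_left _ (by positivity)
        linarith
    _ = 2 ^ (α + 2) * (G2 + G1 + Qf (β₁ + β₂) s + Qf (β₁ + β₂) t) := by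
        rw [two_rpow_eq]; ring

/-- Lemma convolR: sup over u of (1+|u|)^α ∫ g₁(u-t) g₂(t) dt is finite. -/
theorem stmt0 (α β₁ β₂ : ℝ) (hα : 1 < α)
    (hβ₁ : β₁ ∈ Set.Ico (0:ℝ) 1) (hβ₂ : β₂ ∈ Set.Ico (0:ℝ) 1)
    (hsum : β₁ + β₂ < 1)
    (g₁ g₂ : ℝ → ℝ)
    (hg₁ : ∀ t, g₁ t = |t| ^ (-β₁) * (1 + |t|) ^ (β₁ - α))
    (hg₂ : ∀ t, g₂ t = |t| ^ (-β₂) * (1 + |t|) ^ (β₂ - α)) :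
    ∃ C : ℝ, ∀ u : ℝ, (1 + |u|) ^ α * ∫ t : ℝ, g₁ (u - t) * g₂ t ≤ C := by
  obtain ⟨hβ₁0, hβ₁1⟩ := hβ₁
  obtain ⟨hβ₂0, hβ₂1⟩ := hβ₂
  have hσ0 : 0 ≤ β₁ + β₂ := by linarith
  simp only [hg₁, hg₂]
  have hG1int : Integrable (fun t : ℝ => |t| ^ (-β₁) * (1 + |t|) ^ (β₁ - α)) :=
    g_integrable α β₁ hα hβ₁0 hβ₁1
  have hG2int : Integrable (fun t : ℝ => |t| ^ (-β₂) * (1 + |t|) ^ (β₂ - α)) :=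
    g_integrable α β₂ hα hβ₂0 hβ₂1
  have hQint : Integrable (Qf (β₁ + β₂)) := Qf_integrable hσ0 hsum
  refine ⟨2 ^ (α + 2) * ((∫ t : ℝ, |t| ^ (-β₂) * (1 + |t|) ^ (β₂ - α)) +
    (∫ t : ℝ, |t| ^ (-β₁) * (1 + |t|) ^ (β₁ - α)) +
    (∫ t : ℝ, Qf (β₁ + β₂) t) + ∫ t : ℝ, Qf (β₁ + β₂) t), fun u => ?_⟩
  set F : ℝ → ℝ := fun t => 2 ^ (α + 2) * ((|t| ^ (-β₂) * (1 + |t|) ^ (β₂ - α)) +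
    (|u - t| ^ (-β₁) * (1 + |u - t|) ^ (β₁ - α)) +
    Qf (β₁ + β₂) (u - t) + Qf (β₁ + β₂) t) with hFdef
  have hFint : Integrable F := by
    apply Integrable.const_mul
    exact ((hG2int.add (hG1int.comp_sub_left u)).add (hQint.comp_sub_left u)).add hQint
  have hae : ∀ᵐ t : ℝ, t ≠ 0 ∧ u - t ≠ 0 := by
    have h1 : ∀ᵐ t : ℝ, t ≠ 0 := by
      rw [ae_iff]
      simp only [ne_eq, not_not]
      simpa using Real.volume_singleton (a := 0)
    have h2 : ∀ᵐ t : ℝ, t ≠ u := by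
      rw [ae_iff]
      simp only [ne_eq, not_not]
      simpa using Real.volume_singleton (a := u)
    filter_upwards [h1, h2] with t ht htu
    exact ⟨ht, sub_ne_zero.2 (Ne.symm htu)⟩
  have hbound : ∀ᵐ t : ℝ, (1 + |u|) ^ α *
      ((|u - t| ^ (-β₁) * (1 + |u - t|) ^ (β₁ - α)) *
        (|t| ^ (-β₂) * (1 + |t|) ^ (β₂ - α))) ≤ F t := by
    filter_upwards [hae] with t ⟨ht, hs⟩
    exact master α β₁ β₂ hα hβ₁0 hβ₁1 hβ₂0 hβ₂1 ht hs
  have hLmeas : AEStronglyMeasurable (fun t : ℝ => (1 + |u|) ^ α *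
      ((|u - t| ^ (-β₁) * (1 + |u - t|) ^ (β₁ - α)) *
        (|t| ^ (-β₂) * (1 + |t|) ^ (β₂ - α)))) volume := by
    apply Measurable.aestronglyMeasurable
    apply Measurable.const_mul
    exact ((gfun_measurable β₁ (β₁ - α)).comp (measurable_const.sub measurable_id)).mul
      (gfun_measurable β₂ (β₂ - α))
  have hLint : Integrable (fun t : ℝ => (1 + |u|) ^ α *
      ((|u - t| ^ (-β₁) * (1 + |u - t|) ^ (β₁ - α)) *
        (|t| ^ (-β₂) * (1 + |t|) ^ (β₂ - α)))) := by
    apply hFint.mono' hLmeas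
    filter_upwards [hbound] with t hb
    rw [Real.norm_eq_abs, abs_of_nonneg (by positivity)]
    exact hb
  rw [← MeasureTheory.integral_const_mul]
  calc (∫ t : ℝ, (1 + |u|) ^ α *
        ((|u - t| ^ (-β₁) * (1 + |u - t|) ^ (β₁ - α)) *
          (|t| ^ (-β₂) * (1 + |t|) ^ (β₂ - α))))
      ≤ ∫ t : ℝ, F t := integral_mono_ae hLint hFint hbound
    _ = 2 ^ (α + 2) * ((∫ t : ℝ, |t| ^ (-β₂) * (1 + |t|) ^ (β₂ - α)) +
        (∫ t : ℝ, |t| ^ (-β₁) * (1 + |t|) ^ (β₁ - α)) +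
        (∫ t : ℝ, Qf (β₁ + β₂) t) + ∫ t : ℝ, Qf (β₁ + β₂) t) := by
        rw [hFdef]
        rw [MeasureTheory.integral_const_mul]
        congr 1
        have i1 : Integrable (fun t : ℝ => |t| ^ (-β₂) * (1 + |t|) ^ (β₂ - α) +
            |u - t| ^ (-β₁) * (1 + |u - t|) ^ (β₁ - α) + Qf (β₁ + β₂) (u - t)) := by
          exact (hG2int.add (hG1int.comp_sub_left u)).add (hQint.comp_sub_left u)
        have i2 : Integrable (fun t : ℝ => |t| ^ (-β₂) * (1 + |t|) ^ (β₂ - α) +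
            |u - t| ^ (-β₁) * (1 + |u - t|) ^ (β₁ - α)) := by
          exact hG2int.add (hG1int.comp_sub_left u)
        have i3 : Integrable (fun t : ℝ => |u - t| ^ (-β₁) * (1 + |u - t|) ^ (β₁ - α)) := by
          exact hG1int.comp_sub_left u
        have i4 : Integrable (fun t : ℝ => Qf (β₁ + β₂) (u - t)) := by
          exact hQint.comp_sub_left u
        rw [integral_add i1 hQint, integral_add i2 i4, integral_add hG2int i3]
        rw [integral_sub_left_eq_self (fun t : ℝ => |t| ^ (-β₁) * (1 + |t|) ^ (β₁ - α)) volume u]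
        rw [integral_sub_left_eq_self (Qf (β₁ + β₂)) volume u]
end

section
/- Let q be a positive integer, f : ℝ → [0,∞) measurable, and β = (β₁,…,β_q) ∈ ℝ^q. Then ∫_{ℝ^q} f(y₁+⋯+y_q) ∏_{i=1}^q |y_i|^{β_i} dy₁⋯dy_q = Γ · ∫_ℝ f(s) |s|^{q-1+β₁+⋯+β_q} ds, where Γ = ∏_{i=2}^q ∫_ℝ |t|^{q-i+B_i} |1-t|^{β_{i-1}} dt with B_i = β_i + ⋯ + β_q (with the convention ∞·0 = 0 when Γ is infinite). -/
open MeasureTheory Real ENNReal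

/-!
Induction on `q`, integrating out `y₁` with `s = y₂ + ⋯ + y_q` fixed. By Tonelli the new
one-dimensional weight of the sum `u = y₁ + s` is `∫ |u - s|^{β₁} |s|^c ds`, and the substitution
`s = u t` turns this into `|u|^{c + β₁ + 1}` times the beta-type integral `∫ |t|^c |1 - t|^{β₁} dt`.
Each step therefore contributes one factor of `Γ` and raises the exponent of `|s|` by `β₁ + 1`.
-/

section

variable {G : Type*} [MeasureSpace G]

theorem lintegral_fin_one (F : (Fin 1 → G) → ℝ≥0∞) :
    ∫⁻ y, F y = ∫⁻ x, F (fun _ => x) :=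
  ((volume_preserving_funUnique (Fin 1) G).symm).lintegral_comp_emb
    (MeasurableEquiv.measurableEmbedding _) F |>.symm

variable [SigmaFinite (volume : Measure G)]

theorem lintegral_fin_succ_cons {n : ℕ} {F : (Fin (n + 1) → G) → ℝ≥0∞} (hF : Measurable F) :
    ∫⁻ y, F y = ∫⁻ z : Fin n → G, ∫⁻ x, F (Fin.cons x z) := by
  set e := (MeasurableEquiv.piFinSuccAbove (fun _ : Fin (n + 1) => G) 0).symm
  rw [← (volume_preserving_piFinSuccAbove _ 0).symm.lintegral_comp_emb e.measurableEmbedding,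
    Measure.volume_eq_prod,
    lintegral_prod_symm (fun p => F (e p)) (hF.comp e.measurable).aemeasurable]
  simp only [e, MeasurableEquiv.piFinSuccAbove_symm_apply, Fin.insertNthEquiv_zero]
  rfl

variable [AddCommMonoid G] [MeasurableAdd₂ G]

theorem lintegral_sum_mul_prod_fin_succ {n : ℕ} {f : G → ℝ≥0∞} (hf : Measurable f)
    {w : Fin (n + 1) → G → ℝ≥0∞} (hw : ∀ i, Measurable (w i)) :
    ∫⁻ y : Fin (n + 1) → G, f (∑ i, y i) * ∏ i, w i (y i)
      = ∫⁻ z : Fin n → G, (∫⁻ x, f (x + ∑ i, z i) * w 0 x) * ∏ i, w i.succ (z i) := by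
  rw [lintegral_fin_succ_cons (by fun_prop)]
  refine lintegral_congr fun z => ?_
  rw [← lintegral_mul_const _ (by fun_prop)]
  simp only [Fin.sum_cons, Fin.prod_univ_succ, Fin.cons_zero, Fin.cons_succ, mul_assoc]

end

noncomputable def absBeta (c b : ℝ) : ℝ≥0∞ := ∫⁻ t : ℝ, ENNReal.ofReal (|t| ^ c * |1 - t| ^ b)

theorem lintegral_abs_sub_rpow_mul_abs_rpow {u : ℝ} (hu : u ≠ 0) (b c : ℝ) :
    ∫⁻ s : ℝ, ENNReal.ofReal (|u - s| ^ b * |s| ^ c)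
      = ENNReal.ofReal (|u| ^ (c + b + 1)) * absBeta c b := by
  have hu' : 0 < |u| := abs_pos.2 hu
  have hscale : ∀ t : ℝ, ENNReal.ofReal (|u - u * t| ^ b * |u * t| ^ c)
      = ENNReal.ofReal (|u| ^ (c + b)) * ENNReal.ofReal (|t| ^ c * |1 - t| ^ b) := by
    intro t
    rw [← ENNReal.ofReal_mul (by positivity), show u - u * t = u * (1 - t) by ring, abs_mul,
      abs_mul, mul_rpow hu'.le (abs_nonneg _), mul_rpow hu'.le (abs_nonneg _), rpow_add hu']
    congr 1
    ring
  conv_lhs => rw [← Real.smul_map_volume_mul_left hu]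
  rw [lintegral_smul_measure, lintegral_map (by fun_prop) (measurable_const_mul u)]
  simp_rw [hscale]
  rw [lintegral_const_mul _ (by fun_prop), absBeta, smul_eq_mul, ← mul_assoc,
    ← ENNReal.ofReal_mul hu'.le, rpow_add_one hu'.ne', mul_comm |u|]

theorem lintegral_lintegral_add_mul_abs_rpow {f : ℝ → ℝ≥0∞} (hf : Measurable f) (b c : ℝ) :
    ∫⁻ s : ℝ, (∫⁻ y : ℝ, f (y + s) * ENNReal.ofReal (|y| ^ b)) * ENNReal.ofReal (|s| ^ c)
      = absBeta c b * ∫⁻ u : ℝ, f u * ENNReal.ofReal (|u| ^ (c + b + 1)) := by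
  calc
    _ = ∫⁻ s : ℝ, ∫⁻ u : ℝ, f u * ENNReal.ofReal (|u - s| ^ b * |s| ^ c) := by
      refine lintegral_congr fun s => ?_
      rw [← lintegral_mul_const _ (by fun_prop),
        ← lintegral_add_right_eq_self (fun u => f u * ENNReal.ofReal (|u - s| ^ b * |s| ^ c)) s]
      refine lintegral_congr fun y => ?_
      rw [add_sub_cancel_right, ENNReal.ofReal_mul (by positivity), mul_assoc]
    _ = ∫⁻ u : ℝ, f u * ∫⁻ s : ℝ, ENNReal.ofReal (|u - s| ^ b * |s| ^ c) := by
      rw [lintegral_lintegral_swap (by fun_prop)]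
      exact lintegral_congr fun u => lintegral_const_mul _ (by fun_prop)
    _ = ∫⁻ u : ℝ, f u * (ENNReal.ofReal (|u| ^ (c + b + 1)) * absBeta c b) := by
      refine lintegral_congr_ae ?_
      filter_upwards [Measure.ae_ne volume 0] with u hu
      rw [lintegral_abs_sub_rpow_mul_abs_rpow hu]
    _ = _ := by
      rw [← lintegral_const_mul _ (by fun_prop)]
      exact lintegral_congr fun u => by ring

theorem Finset.sum_Icc_comp_add_one {M : Type*} [AddCommMonoid M] (g : ℕ → M) (a b : ℕ) :
    ∑ j ∈ Finset.Icc a b, g (j + 1) = ∑ j ∈ Finset.Icc (a + 1) (b + 1), g j := by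
  rw [← Finset.map_add_right_Icc a b 1, Finset.sum_map]
  rfl

noncomputable def gammaConst (q : ℕ) (β : ℕ → ℝ) : ℝ≥0∞ :=
  ∏ i ∈ Finset.Icc 2 q, absBeta ((q : ℝ) - i + ∑ j ∈ Finset.Icc i q, β j) (β (i - 1))

def sumExponent (q : ℕ) (β : ℕ → ℝ) : ℝ := (q : ℝ) - 1 + ∑ i ∈ Finset.Icc 1 q, β i

theorem sumExponent_succ (q : ℕ) (β : ℕ → ℝ) :
    sumExponent (q + 1) β = sumExponent q (fun j => β (j + 1)) + β 1 + 1 := by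
  rw [sumExponent, sumExponent, Finset.sum_Icc_comp_add_one,
    ← Finset.add_sum_Ioc_eq_sum_Icc (by omega : 1 ≤ q + 1), ← Finset.Icc_add_one_left_eq_Ioc]
  push_cast
  ring

theorem gammaConst_succ {q : ℕ} (hq : 1 ≤ q) (β : ℕ → ℝ) :
    gammaConst (q + 1) β
      = absBeta (sumExponent q (fun j => β (j + 1))) (β 1) * gammaConst q (fun j => β (j + 1)) := by
  rw [gammaConst, gammaConst, ← Finset.mul_prod_Ioc_eq_prod_Icc (by omega : 2 ≤ q + 1),
    ← Finset.Icc_add_one_left_eq_Ioc, ← Finset.map_add_right_Icc 2 q 1, Finset.prod_map]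
  congr 1
  · rw [sumExponent, Finset.sum_Icc_comp_add_one]
    push_cast
    congr 1
    ring
  · refine Finset.prod_congr rfl fun i hi => ?_
    have hi2 : 2 ≤ i := (Finset.mem_Icc.1 hi).1
    simp only [addRightEmbedding_apply, Finset.sum_Icc_comp_add_one,
      Nat.sub_add_cancel (by omega : 1 ≤ i)]
    push_cast
    congr 2
    ring

/-- Change-of-variables identity: the integral over ℝ^q of f(y₁+⋯+y_q)∏|y_i|^{β_i}
    equals Γ times the one-dimensional integral of f(s)|s|^{q-1+Σβ_i}. -/
theorem stmt4 (q : ℕ) (hq : 0 < q) (f : ℝ → ℝ≥0∞) (hf : Measurable f) (β : ℕ → ℝ) :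
    ∫⁻ y : Fin q → ℝ, f (∑ i, y i) * ∏ i : Fin q, ENNReal.ofReal (|y i| ^ β (i.1 + 1))
      = (∏ i ∈ Finset.Icc 2 q, ∫⁻ t : ℝ,
            ENNReal.ofReal (|t| ^ ((q : ℝ) - (i : ℝ) + ∑ j ∈ Finset.Icc i q, β j)
              * |1 - t| ^ β (i - 1)))
        * ∫⁻ s : ℝ, f s * ENNReal.ofReal (|s| ^ ((q : ℝ) - 1 + ∑ i ∈ Finset.Icc 1 q, β i)) := by
  change _ = gammaConst q β * ∫⁻ s, f s * ENNReal.ofReal (|s| ^ sumExponent q β)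
  induction q, hq using Nat.le_induction generalizing f β with
  | base =>
    rw [lintegral_fin_one]
    simp [gammaConst, sumExponent]
  | succ q hq ih =>
    rw [lintegral_sum_mul_prod_fin_succ (w := fun i x => ENNReal.ofReal (|x| ^ β (i.1 + 1))) hf
      (fun i => by fun_prop)]
    simp only [Fin.val_succ, Fin.val_zero, zero_add]
    rw [ih (fun s => ∫⁻ x, f (x + s) * ENNReal.ofReal (|x| ^ β 1)) (by fun_prop)
      (fun j => β (j + 1)), lintegral_lintegral_add_mul_abs_rpow hf, gammaConst_succ hq, sumExponent_succ]
    ring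
end

section
/- Let g₁, g₂ be (2π)-periodic locally integrable functions with g_i(λ) = |λ|^{-β_i} g_i*(λ) on (-π,π), where β₁, β₂ ∈ (0,1), β₁ + β₂ < 1, and each g_i* is (2π)-periodic, nonnegative, bounded on (-π,π), positive at 0 and continuous at 0. Then the periodic convolution g(λ) = ∫_{-π}^π g₁(u) g₂(λ-u) du is bounded and continuous on (-π,π) and satisfies g(0) > 0. -/
/-!
Pick `θ ∈ (β₁, 1 - β₂)`, possible since `β₁ + β₂ < 1`, and the conjugate exponents `p = 1/θ`,
`q = 1/(1 - θ)`. Then `β₁ p < 1` and `β₂ q < 1`, so `g₁ ∈ L^p(-π, π)`, and by periodicity `g₂`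
restricted to `(-2π, 2π)` lies in `L^q(ℝ)`; on `(-π, π)` only these values of `g₂` enter the
convolution. Hölder's inequality bounds the convolution by `‖g₁‖_p ‖g₂‖_q`, and continuity of
translation in `L^q` (`q < ∞`) makes it continuous. At `0` the integrand `g₁(u) g₂(-u)` is
nonnegative, and strictly positive for small `u ≠ 0` because `g₁*` and `g₂*` are continuous and
positive at `0`.
-/

open MeasureTheory Real intervalIntegral

open Filter Set Topology
open scoped ENNReal

variable {E : Type*} [NormedAddCommGroup E]

theorem locallyIntegrable_abs_rpow_neg {γ : ℝ} (hγ : γ < 1) :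
    LocallyIntegrable (fun x : ℝ => |x| ^ (-γ)) volume :=
  locallyIntegrable_of_norm_le_rpow (by simp) (C := 1) (α := γ) (by simpa using hγ)
    (.of_forall fun x => by rw [one_mul, Real.norm_eq_abs, Real.norm_eq_abs,
      abs_of_nonneg (by positivity)])
    ((continuous_abs.measurable.pow_const _).aestronglyMeasurable)

theorem memLp_abs_rpow_neg {β : ℝ} {p : ℝ≥0∞} (hp0 : p ≠ 0) (hp : p ≠ ∞) (hβp : β * p.toReal < 1)
    {s : Set ℝ} (hs : Bornology.IsBounded s) :
    MemLp (fun x : ℝ => |x| ^ (-β)) p (volume.restrict s) := by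
  rw [← integrable_norm_rpow_iff (continuous_abs.measurable.pow_const _).aestronglyMeasurable
    hp0 hp]
  refine (((locallyIntegrable_abs_rpow_neg hβp).integrableOn_isCompact
    hs.isCompact_closure).mono_set subset_closure).congr (.of_forall fun x => ?_)
  dsimp only
  rw [Real.norm_eq_abs, abs_of_nonneg (rpow_nonneg (abs_nonneg x) _), ← rpow_mul (abs_nonneg x),
    neg_mul]

theorem Function.Periodic.memLp_indicator_Ioc {g : ℝ → E} {T : ℝ} (hg : Function.Periodic g T)
    (hT : 0 < T) {p : ℝ≥0∞} (hp1 : 1 ≤ p) (hp : p ≠ ∞) {t : ℝ}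
    (ht : MemLp g p (volume.restrict (Ioo t (t + T)))) (a b : ℝ) :
    MemLp ((Ioc a b).indicator g) p volume := by
  have hp0 : p ≠ 0 := (zero_lt_one.trans_le hp1).ne'
  rw [Measure.restrict_congr_set Ioo_ae_eq_Ioc] at ht
  have hT' : t ≤ t + T := by linarith
  have hmeas : AEStronglyMeasurable g (volume.restrict (Ioc a b)) :=
    (hg.intervalIntegrable hT.ne' ((intervalIntegrable_iff_integrableOn_Ioc_of_le hT').2
      (ht.integrable hp1)) a b).def'.mono_set Set.Ioc_subset_uIoc |>.1
  rw [memLp_indicator_iff_restrict measurableSet_Ioc, ← integrable_norm_rpow_iff hmeas hp0 hp]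
  exact ((hg.comp fun y => ‖y‖ ^ p.toReal).intervalIntegrable hT.ne'
    ((intervalIntegrable_iff_integrableOn_Ioc_of_le hT').2
      (ht.integrable_norm_rpow hp0 hp)) a b).def'.mono_set Set.Ioc_subset_uIoc

theorem exists_holderConjugate_mul_lt_one {β₁ β₂ : ℝ} (hβ₁ : 0 ≤ β₁) (hβ₂ : 0 ≤ β₂)
    (hsum : β₁ + β₂ < 1) :
    ∃ p q : ℝ≥0∞, p.HolderConjugate q ∧ p ≠ ∞ ∧ q ≠ ∞ ∧ β₁ * p.toReal < 1 ∧ β₂ * q.toReal < 1 := by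
  obtain ⟨θ, hθ₁, hθ₂⟩ : ∃ θ, β₁ < θ ∧ β₂ < 1 - θ :=
    ⟨(β₁ + (1 - β₂)) / 2, by linarith, by linarith⟩
  have hθ₀ : 0 < θ := by linarith
  refine ⟨.ofReal θ⁻¹, .ofReal (1 - θ)⁻¹,
    (Real.HolderConjugate.inv_one_sub_inv hθ₀ (by linarith)).ennrealOfReal, ENNReal.ofReal_ne_top,
    ENNReal.ofReal_ne_top, ?_, ?_⟩
  · rw [ENNReal.toReal_ofReal (by positivity), ← div_eq_mul_inv, div_lt_one hθ₀]
    exact hθ₁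
  · rw [ENNReal.toReal_ofReal (inv_nonneg.2 (by linarith)), ← div_eq_mul_inv,
      div_lt_one (by linarith)]
    exact hθ₂

theorem HasCompactSupport.tendsto_eLpNorm_comp_add_sub {φ : ℝ → E} (hφ : HasCompactSupport φ)
    (hφc : Continuous φ) {q : ℝ≥0∞} (hq : q ≠ ∞) :
    Tendsto (fun t => eLpNorm (fun x => φ (x + t) - φ x) q volume) (𝓝 0) (𝓝 0) := by
  obtain ⟨R, hR⟩ := hφ.isBounded.subset_closedBall 0
  set K := Metric.closedBall (0 : ℝ) (R + 1)
  have hsupp : ∀ t, |t| < 1 → (Function.support fun x => φ (x + t)) ⊆ K := by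
    intro t ht x hx
    have := hR (subset_tsupport _ hx)
    simp only [K, Metric.mem_closedBall, Real.dist_eq, sub_zero] at this ⊢
    have := abs_add_le (x + t) (-t)
    rw [abs_neg, add_neg_cancel_right] at this
    linarith
  have hK : volume K ^ (1 / q.toReal) ≠ ∞ :=
    ENNReal.rpow_ne_top_of_nonneg (by positivity) measure_closedBall_lt_top.ne
  have hlim : Tendsto (fun c => ENNReal.ofReal c * volume K ^ (1 / q.toReal)) (𝓝[>] 0) (𝓝 0) := by
    have := ENNReal.Tendsto.mul_const (ENNReal.tendsto_ofReal (tendsto_id (x := 𝓝 (0 : ℝ))))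
      (Or.inr hK)
    rw [ENNReal.ofReal_zero, zero_mul] at this
    exact this.mono_left nhdsWithin_le_nhds
  rw [ENNReal.tendsto_nhds_zero]
  intro ε hε
  obtain ⟨c, hcε, hc⟩ := ((hlim.eventually (eventually_le_nhds hε)).and self_mem_nhdsWithin).exists
  obtain ⟨δ, hδ, hφδ⟩ :=
    Metric.uniformContinuous_iff.1 (hφ.uniformContinuous_of_continuous hφc) c hc
  filter_upwards [Metric.ball_mem_nhds (0 : ℝ) (lt_min hδ one_pos)] with t ht
  rw [Metric.mem_ball, Real.dist_eq, sub_zero, lt_min_iff] at ht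
  refine le_trans ?_ hcε
  have hsuppφ : Function.support φ ⊆ K := (subset_tsupport φ).trans
    (hR.trans (Metric.closedBall_subset_closedBall (by linarith)))
  refine eLpNorm_sub_le_of_dist_bdd volume hq Metric.isClosed_closedBall.measurableSet hc.le
    (fun x => (hφδ ?_).le) (hsupp t ht.2) hsuppφ
  simpa [Real.dist_eq] using ht.1

theorem MeasureTheory.MemLp.tendsto_eLpNorm_comp_add_sub [NormedSpace ℝ E] {h : ℝ → E}
    {q : ℝ≥0∞} (hq1 : 1 ≤ q) (hq : q ≠ ∞) (hh : MemLp h q volume) :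
    Tendsto (fun t => eLpNorm (fun x => h (x + t) - h x) q volume) (𝓝 0) (𝓝 0) := by
  rw [ENNReal.tendsto_nhds_zero]
  intro ε hε
  have hε3 : ε / 3 ≠ 0 := by simpa using hε.ne'
  obtain ⟨φ, hφ, hhφ, hφc, -⟩ := hh.exists_hasCompactSupport_eLpNorm_sub_le hq hε3
  filter_upwards [ENNReal.tendsto_nhds_zero.1 (hφ.tendsto_eLpNorm_comp_add_sub hφc hq) _
    (pos_iff_ne_zero.2 hε3)] with t ht
  set ψ := h - φ
  have hmeas : AEStronglyMeasurable ψ volume := hh.1.sub hφc.aestronglyMeasurable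
  have hψt : eLpNorm (fun x => ψ (x + t)) q volume = eLpNorm ψ q volume :=
    eLpNorm_comp_measurePreserving hmeas (measurePreserving_add_right volume t)
  have hsplit : (fun x => h (x + t) - h x) =
      (fun x => ψ (x + t)) + (fun x => φ (x + t) - φ x) - ψ := by
    ext x; simp only [ψ, Pi.add_apply, Pi.sub_apply]; abel
  have hmeas_t : AEStronglyMeasurable (fun x => ψ (x + t)) volume :=
    hmeas.comp_measurePreserving (measurePreserving_add_right volume t)
  have hmeas_φ : AEStronglyMeasurable (fun x => φ (x + t) - φ x) volume :=
    ((hφc.comp (continuous_add_const t)).sub hφc).aestronglyMeasurable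
  calc eLpNorm (fun x => h (x + t) - h x) q volume
      ≤ eLpNorm ((fun x => ψ (x + t)) + fun x => φ (x + t) - φ x) q volume
          + eLpNorm ψ q volume := by
        rw [hsplit]; exact eLpNorm_sub_le (hmeas_t.add hmeas_φ) hmeas hq1
    _ ≤ eLpNorm (fun x => ψ (x + t)) q volume + eLpNorm (fun x => φ (x + t) - φ x) q volume
          + eLpNorm ψ q volume := by
        gcongr; exact eLpNorm_add_le hmeas_t hmeas_φ hq1
    _ ≤ ε / 3 + ε / 3 + ε / 3 := by rw [hψt]; gcongr
    _ = ε := ENNReal.add_thirds ε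

section Convolution

variable {𝕜 : Type*} [RCLike 𝕜] {p q : ℝ≥0∞} [p.HolderConjugate q] {s : Set ℝ} {f h : ℝ → 𝕜}

theorem eLpNorm_mul_comp_sub_le (hf : AEStronglyMeasurable f (volume.restrict s))
    (hh : AEStronglyMeasurable h volume) (x : ℝ) :
    eLpNorm (fun u => f u * h (x - u)) 1 (volume.restrict s)
      ≤ eLpNorm f p (volume.restrict s) * eLpNorm h q volume := by
  have hrefl := Measure.measurePreserving_sub_left volume x
  calc eLpNorm (fun u => f u * h (x - u)) 1 (volume.restrict s)
      ≤ eLpNorm f p (volume.restrict s) * eLpNorm (fun u => h (x - u)) q (volume.restrict s) :=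
        eLpNorm_smul_le_mul_eLpNorm (p := p) (q := q) (r := 1) (φ := f) (f := fun u => h (x - u))
          (hh.comp_measurePreserving hrefl).restrict hf
    _ ≤ eLpNorm f p (volume.restrict s) * eLpNorm (fun u => h (x - u)) q volume := by
        gcongr; exact Measure.restrict_le_self
    _ = eLpNorm f p (volume.restrict s) * eLpNorm h q volume := by
        rw [← eLpNorm_comp_measurePreserving hh hrefl]; rfl

theorem integrable_mul_comp_sub (hf : MemLp f p (volume.restrict s)) (hh : MemLp h q volume)
    (x : ℝ) : Integrable (fun u => f u * h (x - u)) (volume.restrict s) :=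
  hf.integrable_mul
    ((hh.comp_measurePreserving (Measure.measurePreserving_sub_left volume x)).restrict s)

theorem enorm_integral_mul_comp_sub_le (hf : AEStronglyMeasurable f (volume.restrict s))
    (hh : AEStronglyMeasurable h volume) (x : ℝ) :
    ‖∫ u in s, f u * h (x - u)‖ₑ ≤ eLpNorm f p (volume.restrict s) * eLpNorm h q volume :=
  (enorm_integral_le_lintegral_enorm _).trans <|
    eLpNorm_one_eq_lintegral_enorm.symm.le.trans (eLpNorm_mul_comp_sub_le hf hh x)

theorem norm_integral_mul_comp_sub_le (hf : MemLp f p (volume.restrict s))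
    (hh : MemLp h q volume) (x : ℝ) :
    ‖∫ u in s, f u * h (x - u)‖ ≤
      (eLpNorm f p (volume.restrict s) * eLpNorm h q volume).toReal := by
  rw [← toReal_enorm]
  exact ENNReal.toReal_mono (ENNReal.mul_ne_top hf.eLpNorm_ne_top hh.eLpNorm_ne_top)
    (enorm_integral_mul_comp_sub_le hf.1 hh.1 x)

theorem continuous_integral_mul_comp_sub (hq : q ≠ ∞) (hf : MemLp f p (volume.restrict s))
    (hh : MemLp h q volume) : Continuous fun x => ∫ u in s, f u * h (x - u) := by
  have hq1 : 1 ≤ q := ENNReal.HolderConjugate.one_le q p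
  rw [continuous_iff_continuousAt]
  intro x₀
  have hdiff : ∀ x, (∫ u in s, f u * h (x - u)) - ∫ u in s, f u * h (x₀ - u) =
      ∫ u in s, f u * (fun v => h (v + (x - x₀)) - h v) (x₀ - u) := by
    intro x
    rw [← integral_sub (integrable_mul_comp_sub hf hh x) (integrable_mul_comp_sub hf hh x₀)]
    congr 1; ext u; ring_nf
  have hbound : ∀ x, edist (∫ u in s, f u * h (x - u)) (∫ u in s, f u * h (x₀ - u))
      ≤ eLpNorm f p (volume.restrict s) * eLpNorm (fun v => h (v + (x - x₀)) - h v) q volume := by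
    intro x
    rw [edist_eq_enorm_sub, hdiff]
    exact enorm_integral_mul_comp_sub_le hf.1
      ((hh.1.comp_measurePreserving (measurePreserving_add_right volume _)).sub hh.1) x₀
  have hlim : Tendsto (fun x => eLpNorm f p (volume.restrict s)
      * eLpNorm (fun v => h (v + (x - x₀)) - h v) q volume) (𝓝 x₀) (𝓝 0) := by
    simpa using ENNReal.Tendsto.const_mul ((hh.tendsto_eLpNorm_comp_add_sub hq1 hq).comp
      (tendsto_sub_nhds_zero_iff.2 tendsto_id)) (Or.inr hf.eLpNorm_ne_top)
  exact tendsto_iff_edist_tendsto_0.2 (tendsto_of_tendsto_of_tendsto_of_le_of_le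
    tendsto_const_nhds hlim (fun _ => zero_le) hbound)

theorem indicator_Ioc_sub_eq {a b x u : ℝ} (hx : x ∈ Icc a b) (hu : u ∈ Ioo a b) :
    (Ioc (a - b) (b - a)).indicator h (x - u) = h (x - u) :=
  indicator_of_mem (mem_Ioc.2 ⟨by linarith [hx.1, hu.2], by linarith [hx.2, hu.1]⟩) h

theorem intervalIntegral_mul_comp_sub_eq {a b x : ℝ} (hab : a ≤ b) (hx : x ∈ Icc a b) :
    ∫ u in a..b, f u * h (x - u) =
      ∫ u in Ioo a b, f u * (Ioc (a - b) (b - a)).indicator h (x - u) := by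
  rw [integral_of_le hab, integral_Ioc_eq_integral_Ioo]
  exact setIntegral_congr_fun measurableSet_Ioo fun u hu => by rw [indicator_Ioc_sub_eq hx hu]

end Convolution

theorem setIntegral_Ioo_pos_of_pos_near {f : ℝ → ℝ} {a b c : ℝ} (hf : IntegrableOn f (Ioo a b))
    (hc : c ∈ Ioo a b) (hnn : ∀ u ∈ Ioo a b, u ≠ c → 0 ≤ f u)
    (hpos : ∀ᶠ u in 𝓝 c, u ≠ c → 0 < f u) : 0 < ∫ u in Ioo a b, f u := by
  have hnn_ae : 0 ≤ᵐ[volume.restrict (Ioo a b)] f := by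
    filter_upwards [ae_restrict_mem measurableSet_Ioo, ae_restrict_of_ae (volume.ae_ne c)]
      with u hu huc using hnn u hu huc
  rw [setIntegral_pos_iff_support_of_nonneg_ae hnn_ae hf]
  obtain ⟨d, hcd, hd⟩ := mem_nhdsGT_iff_exists_Ioo_subset.1
    (nhdsWithin_le_nhds (hpos.and (Ioo_mem_nhds hc.1 hc.2)))
  calc (0 : ℝ≥0∞) < volume (Ioo c d) := by simpa using hcd
    _ ≤ volume (Function.support f ∩ Ioo a b) :=
      measure_mono fun u hu => ⟨((hd hu).1 hu.1.ne').ne', (hd hu).2⟩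

section PowerSingular

variable {a b β : ℝ} {g gs : ℝ → ℝ}

theorem memLp_of_eq_abs_rpow_mul {B : ℝ} {p : ℝ≥0∞} (hp0 : p ≠ 0) (hp : p ≠ ∞)
    (hβp : β * p.toReal < 1) (hg : AEStronglyMeasurable g (volume.restrict (Ioo a b)))
    (hrep : ∀ x ∈ Ioo a b, x ≠ 0 → g x = |x| ^ (-β) * gs x) (hnn : ∀ x ∈ Ioo a b, 0 ≤ gs x)
    (hbd : ∀ x ∈ Ioo a b, gs x ≤ B) :
    MemLp g p (volume.restrict (Ioo a b)) := by
  refine ((memLp_abs_rpow_neg hp0 hp hβp (Metric.isBounded_Ioo a b)).const_mul B).of_le hg ?_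
  filter_upwards [ae_restrict_mem measurableSet_Ioo, ae_restrict_of_ae (volume.ae_ne 0)]
    with x hx hx0
  rw [hrep x hx hx0, norm_mul, norm_mul, mul_comm ‖B‖]
  gcongr
  rw [Real.norm_of_nonneg (hnn x hx)]
  exact (hbd x hx).trans (le_abs_self B)

theorem nonneg_of_eq_abs_rpow_mul (hrep : ∀ x ∈ Ioo a b, x ≠ 0 → g x = |x| ^ (-β) * gs x)
    {x : ℝ} (hx : x ∈ Ioo a b) (hx0 : x ≠ 0) (hgs : 0 ≤ gs x) : 0 ≤ g x := by
  rw [hrep x hx hx0]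
  exact mul_nonneg (rpow_nonneg (abs_nonneg x) _) hgs

theorem eventually_pos_of_eq_abs_rpow_mul
    (hrep : ∀ x ∈ Ioo a b, x ≠ 0 → g x = |x| ^ (-β) * gs x) (hab : (0 : ℝ) ∈ Ioo a b)
    (hpos : 0 < gs 0) (hcont : ContinuousAt gs 0) : ∀ᶠ x in 𝓝 0, x ≠ 0 → 0 < g x := by
  filter_upwards [Ioo_mem_nhds hab.1 hab.2, hcont.eventually (lt_mem_nhds hpos)] with x hx hgs hx0
  rw [hrep x hx hx0]
  exact mul_pos (rpow_pos_of_pos (abs_pos.2 hx0) _) hgs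

end PowerSingular

theorem stmt8_general (β₁ β₂ : ℝ) (hβ₁ : β₁ ∈ Set.Ioo (0:ℝ) 1) (hβ₂ : β₂ ∈ Set.Ioo (0:ℝ) 1)
    (hsum : β₁ + β₂ < 1)
    (g₁ g₂ g₁s g₂s : ℝ → ℝ)
    (hper₂ : Function.Periodic g₂ (2 * π))
    (hint₁ : IntegrableOn g₁ (Set.Ioo (-π) π)) (hint₂ : IntegrableOn g₂ (Set.Ioo (-π) π))
    (hrep₁ : ∀ x ∈ Set.Ioo (-π) π, x ≠ 0 → g₁ x = |x| ^ (-β₁) * g₁s x)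
    (hrep₂ : ∀ x ∈ Set.Ioo (-π) π, x ≠ 0 → g₂ x = |x| ^ (-β₂) * g₂s x)
    (hnn₁ : ∀ x, 0 ≤ g₁s x) (hnn₂ : ∀ x, 0 ≤ g₂s x)
    (hbd₁ : ∃ B, ∀ x ∈ Set.Ioo (-π) π, g₁s x ≤ B)
    (hbd₂ : ∃ B, ∀ x ∈ Set.Ioo (-π) π, g₂s x ≤ B)
    (hpos₁ : 0 < g₁s 0) (hpos₂ : 0 < g₂s 0)
    (hcont₁ : ContinuousAt g₁s 0) (hcont₂ : ContinuousAt g₂s 0) :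
    (∃ B, ∀ x ∈ Set.Ioo (-π) π, |∫ u in (-π)..π, g₁ u * g₂ (x - u)| ≤ B)
    ∧ ContinuousOn (fun x => ∫ u in (-π)..π, g₁ u * g₂ (x - u)) (Set.Ioo (-π) π)
    ∧ 0 < ∫ u in (-π)..π, g₁ u * g₂ (0 - u) := by
  obtain ⟨p, q, hpq, hp, hq, hβp₁, hβp₂⟩ :=
    exists_holderConjugate_mul_lt_one hβ₁.1.le hβ₂.1.le hsum
  obtain ⟨B₁, hB₁⟩ := hbd₁
  obtain ⟨B₂, hB₂⟩ := hbd₂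
  have hg₁ : MemLp g₁ p (volume.restrict (Ioo (-π) π)) :=
    memLp_of_eq_abs_rpow_mul (ENNReal.HolderConjugate.ne_zero p q) hp hβp₁ hint₁.1 hrep₁
      (fun x _ => hnn₁ x) hB₁
  have hh₂ : MemLp ((Ioc (-π - π) (π - -π)).indicator g₂) q volume := by
    refine hper₂.memLp_indicator_Ioc two_pi_pos (ENNReal.HolderConjugate.one_le q p) hq
      (t := -π) ?_ _ _
    rw [show -π + 2 * π = π by ring]
    exact memLp_of_eq_abs_rpow_mul (ENNReal.HolderConjugate.ne_zero q p) hq hβp₂ hint₂.1 hrep₂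
      (fun x _ => hnn₂ x) hB₂
  have hπ : -π ≤ π := by linarith [pi_pos]
  have hF (x) (hx : x ∈ Ioo (-π) π) := intervalIntegral_mul_comp_sub_eq (f := g₁) (h := g₂) hπ
    (Ioo_subset_Icc_self hx)
  have h0 : (0 : ℝ) ∈ Ioo (-π) π := ⟨by linarith [pi_pos], pi_pos⟩
  refine ⟨⟨_, fun x hx => (congrArg abs (hF x hx)).trans_le
    (norm_integral_mul_comp_sub_le hg₁ hh₂ x)⟩,
    (continuous_integral_mul_comp_sub hq hg₁ hh₂).continuousOn.congr hF, ?_⟩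
  rw [hF 0 h0]
  refine setIntegral_Ioo_pos_of_pos_near (integrable_mul_comp_sub hg₁ hh₂ 0) h0
    (fun u hu hu0 => ?_) ?_
  · rw [indicator_Ioc_sub_eq (Ioo_subset_Icc_self h0) hu, zero_sub]
    exact mul_nonneg (nonneg_of_eq_abs_rpow_mul hrep₁ hu hu0 (hnn₁ u))
      (nonneg_of_eq_abs_rpow_mul hrep₂ (x := -u) ⟨by linarith [hu.2], by linarith [hu.1]⟩
        (neg_ne_zero.2 hu0) (hnn₂ (-u)))
  · filter_upwards [Ioo_mem_nhds h0.1 h0.2,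
      eventually_pos_of_eq_abs_rpow_mul hrep₁ h0 hpos₁ hcont₁,
      (continuous_neg.tendsto' 0 0 neg_zero).eventually
        (eventually_pos_of_eq_abs_rpow_mul hrep₂ h0 hpos₂ hcont₂)] with u hu hg₁u hg₂u hu0
    rw [indicator_Ioc_sub_eq (Ioo_subset_Icc_self h0) hu, zero_sub]
    exact mul_pos (hg₁u hu0) (hg₂u (neg_ne_zero.2 hu0))

/-- Periodic convolution of two periodic power-singular functions:
    case β₁ + β₂ < 1, the convolution is bounded, continuous on (-π,π) and positive at 0. -/
theorem stmt8 (β₁ β₂ : ℝ) (hβ₁ : β₁ ∈ Set.Ioo (0:ℝ) 1) (hβ₂ : β₂ ∈ Set.Ioo (0:ℝ) 1)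
    (hsum : β₁ + β₂ < 1)
    (g₁ g₂ g₁s g₂s : ℝ → ℝ)
    (hper₁ : Function.Periodic g₁ (2 * π)) (hper₂ : Function.Periodic g₂ (2 * π))
    (hint₁ : IntegrableOn g₁ (Set.Ioo (-π) π)) (hint₂ : IntegrableOn g₂ (Set.Ioo (-π) π))
    (hrep₁ : ∀ x ∈ Set.Ioo (-π) π, x ≠ 0 → g₁ x = |x| ^ (-β₁) * g₁s x)
    (hrep₂ : ∀ x ∈ Set.Ioo (-π) π, x ≠ 0 → g₂ x = |x| ^ (-β₂) * g₂s x)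
    (hpers₁ : Function.Periodic g₁s (2 * π)) (hpers₂ : Function.Periodic g₂s (2 * π))
    (hnn₁ : ∀ x, 0 ≤ g₁s x) (hnn₂ : ∀ x, 0 ≤ g₂s x)
    (hbd₁ : ∃ B, ∀ x ∈ Set.Ioo (-π) π, g₁s x ≤ B)
    (hbd₂ : ∃ B, ∀ x ∈ Set.Ioo (-π) π, g₂s x ≤ B)
    (hpos₁ : 0 < g₁s 0) (hpos₂ : 0 < g₂s 0)
    (hcont₁ : ContinuousAt g₁s 0) (hcont₂ : ContinuousAt g₂s 0) :
    (∃ B, ∀ x ∈ Set.Ioo (-π) π, |∫ u in (-π)..π, g₁ u * g₂ (x - u)| ≤ B)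
    ∧ ContinuousOn (fun x => ∫ u in (-π)..π, g₁ u * g₂ (x - u)) (Set.Ioo (-π) π)
    ∧ 0 < ∫ u in (-π)..π, g₁ u * g₂ (0 - u) :=
  stmt8_general β₁ β₂ hβ₁ hβ₂ hsum g₁ g₂ g₁s g₂s hper₂ hint₁ hint₂ hrep₁ hrep₂ hnn₁ hnn₂ hbd₁ hbd₂
    hpos₁ hpos₂ hcont₁ hcont₂
end
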